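/- Let H be a bounded Hankel operator on H², u = H𝟙, s > 0, and let E = {f ∈ H² : H(Hf) = s²·f}. Suppose there exists h ∈ E with ⟨h, 𝟙⟩ ≠ 0. Then for every f ∈ E with ⟨f, 𝟙⟩ = 0 one has S*f ∈ E and ⟨S*f, u⟩ = 0; in particular S*(E ∩ 𝟙^⊥) ⊆ E ∩ u^⊥. -/

import Mathlib

open MeasureTheory Complex Filter

noncomputable section

namespace HankelSchmidt

instance fact_two_pi_pos : Fact (0 < 2 * Real.pi) := ⟨Real.two_pi_pos⟩

/-- The circle `𝕋`, realized as `ℝ / 2πℤ`. -/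
abbrev Tc : Type := AddCircle (2 * Real.pi)

/-- Normalized arc-length (Haar) measure on the circle. -/
abbrev muc : Measure Tc := AddCircle.haarAddCircle

/-- The space `L²(𝕋)`. -/
abbrev Ltwo := Lp ℂ 2 muc

/-- The Hardy space `H²`: the subspace of `L²(𝕋)` of functions whose Fourier coefficients
of negative index vanish. -/
def Hardy : Submodule ℂ Ltwo where
  carrier := {f | ∀ n : ℤ, n < 0 → fourierBasis.repr f n = 0}
  add_mem' := by
    intro a b ha hb n hn
    simp [map_add, lp.coeFn_add, ha n hn, hb n hn]
  zero_mem' := by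
    intro n hn
    simp
  smul_mem' := by
    intro c a ha n hn
    simp [_root_.map_smul, lp.coeFn_smul, ha n hn]

theorem hardy_isClosed : IsClosed (Hardy : Set Ltwo) := by
  have hset : (Hardy : Set Ltwo) =
      ⋂ (n : ℤ) (_ : n < 0), {f : Ltwo | fourierBasis.repr f n = 0} := by
    ext f
    simp only [Set.mem_iInter, Set.mem_setOf_eq]
    rfl
  rw [hset]
  refine isClosed_iInter fun n => isClosed_iInter fun hn => ?_
  have hcont : Continuous fun f : Ltwo => fourierBasis.repr f n := by
    have h1 : Continuous fun g : lp (fun _ : ℤ => ℂ) 2 => g n :=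
      (continuous_apply n).comp lp.uniformContinuous_coe.continuous
    exact h1.comp fourierBasis.repr.continuous
  exact isClosed_eq hcont continuous_const

instance : CompleteSpace (Hardy : Submodule ℂ Ltwo) := hardy_isClosed.completeSpace_coe

/-- The Hardy space as a type. -/
abbrev Hd := (Hardy : Submodule ℂ Ltwo)

/-- The orthogonal projection `P : L²(𝕋) → H²`. -/
def P2 : Ltwo → Hd := fun f => Hardy.orthogonalProjectionOnto f

/-- The orthogonal projection `P`, viewed as a map `L²(𝕋) → L²(𝕋)` with range `H²`. -/
def PL : Ltwo → Ltwo := fun f => ((P2 f : Hd) : Ltwo)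

theorem fourierCoeff_congr_ae {f g : Tc → ℂ} (h : f =ᵐ[muc] g) (n : ℤ) :
    fourierCoeff f n = fourierCoeff g n :=
  integral_congr_ae (h.mono fun x hx => by dsimp only; rw [hx])

theorem mem_Hardy_iff {f : Ltwo} :
    f ∈ Hardy ↔ ∀ n : ℤ, n < 0 → fourierCoeff (f : Tc → ℂ) n = 0 := by
  constructor
  · intro hf n hn; rw [← fourierBasis_repr]; exact hf n hn
  · intro hf n hn; rw [fourierBasis_repr]; exact hf n hn

/-- Pointwise multiplication by a bounded measurable function preserves `L²`. -/
theorem memLp_mul_of_bounded {g : Tc → ℂ} (hg : AEStronglyMeasurable g muc) {C : ℝ}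
    (hb : ∀ᵐ x ∂muc, ‖g x‖ ≤ C) (f : Ltwo) :
    MemLp (fun x => g x * (f : Tc → ℂ) x) 2 muc := by
  refine MemLp.of_le_mul (c := C) (Lp.memLp f) (hg.mul (Lp.aestronglyMeasurable f)) ?_
  filter_upwards [hb] with x hx
  rw [norm_mul]
  exact mul_le_mul_of_nonneg_right hx (norm_nonneg _)

theorem fourier_abs (n : ℤ) (x : Tc) : ‖fourier n x‖ = 1 := by
  rw [fourier_apply]; exact Circle.norm_coe _

theorem fourier_norm_one (n : ℤ) (x : Tc) : ‖fourier n x‖ ≤ 1 :=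
  le_of_eq (fourier_abs n x)

/-- Multiplication of an `L²` function by the monomial `z^n`. -/
def mulF (n : ℤ) (f : Ltwo) : Ltwo :=
  (memLp_mul_of_bounded ((map_continuous (fourier n)).aestronglyMeasurable)
    (Eventually.of_forall (fourier_norm_one n)) f).toLp _

theorem mulF_coe (n : ℤ) (f : Ltwo) :
    (mulF n f : Tc → ℂ) =ᵐ[muc] fun x => fourier n x * (f : Tc → ℂ) x :=
  MemLp.coeFn_toLp _

theorem fourierCoeff_fourier_mul (f : Tc → ℂ) (m n : ℤ) :
    fourierCoeff (fun x => fourier m x * f x) n = fourierCoeff f (n - m) := by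
  unfold fourierCoeff
  refine integral_congr_ae (Eventually.of_forall fun x => ?_)
  have h : @fourier (2 * Real.pi) (-(n - m)) x = fourier (-n) x * fourier m x := by
    rw [show -(n - m) = -n + m by ring, fourier_add]
  simp only [smul_eq_mul, h]
  ring

/-- The shift operator `S : H² → H²`, `(Sf)(z) = z·f(z)`. -/
def Sop (f : Hd) : Hd :=
  ⟨mulF 1 (f : Ltwo), by
    rw [mem_Hardy_iff]
    intro n hn
    rw [fourierCoeff_congr_ae (mulF_coe 1 (f : Ltwo)) n, fourierCoeff_fourier_mul]
    exact (mem_Hardy_iff.mp f.2) (n - 1) (by omega)⟩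

/-- The adjoint shift `S* : H² → H²`, `S*f = P(z̄·f)`. -/
def SstarOp (f : Hd) : Hd := P2 (mulF (-1) (f : Ltwo))

/-- The constant function `𝟙 ∈ H²`. -/
def oneH : Hd :=
  ⟨fourierLp 2 0, by
    rw [mem_Hardy_iff]
    intro n hn
    rw [← fourierBasis_repr]
    have h1 : (fourierLp (T := 2 * Real.pi) 2 0) = fourierBasis 0 := by
      rw [coe_fourierBasis]
    rw [h1, HilbertBasis.repr_self, lp.single_apply]
    simp [Pi.single_apply, show n ≠ 0 by omega]⟩

/-- The inner product on `H²`, linear in the FIRST argument (the paper's convention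
`⟨f, g⟩ = ∫ f ḡ`). -/
def ipH (f g : Hd) : ℂ := @inner ℂ Ltwo _ (g : Ltwo) (f : Ltwo)

/-- The inner product on `L²(𝕋)`, linear in the FIRST argument. -/
def ipL (f g : Ltwo) : ℂ := @inner ℂ Ltwo _ g f

/-- `θ ∈ H²` is an inner function if `|θ(z)| = 1` a.e. on `𝕋`. -/
def IsInnerFn (θ : Hd) : Prop := ∀ᵐ x ∂muc, ‖(((θ : Ltwo) : Tc → ℂ) x)‖ = 1

/-- The set `θ·H² ⊆ L²(𝕋)` of pointwise a.e. products `θ·f`, `f ∈ H²`. -/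
def thetaHardy (θ : Hd) : Set Ltwo :=
  {g : Ltwo | ∃ f : Hd, (g : Tc → ℂ) =ᵐ[muc]
    fun x => ((θ : Ltwo) : Tc → ℂ) x * ((f : Ltwo) : Tc → ℂ) x}

/-- The model space `K_θ = H² ∩ (θH²)^⊥`, as a subset of `L²(𝕋)`. -/
def KspaceL (θ : Hd) : Set Ltwo :=
  {h : Ltwo | h ∈ Hardy ∧ ∀ g ∈ thetaHardy θ, ipL h g = 0}

/-- The model space `K_θ`, as a subset of `H²`. -/
def Kspace (θ : Hd) : Set Hd := {h : Hd | (h : Ltwo) ∈ KspaceL θ}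

/-- `p` is an isometric multiplier on `K_θ`: `p` is measurable and, for every `h ∈ K_θ`,
the pointwise product `p·h` lies in `H²` and has the same norm as `h`. -/
def IsIsomMult (p : Tc → ℂ) (θ : Hd) : Prop :=
  Measurable p ∧ ∀ h ∈ Kspace θ, ∃ g : Hd,
    ((g : Ltwo) : Tc → ℂ) =ᵐ[muc] (fun x => p x * ((h : Ltwo) : Tc → ℂ) x) ∧
    ‖(g : Ltwo)‖ = ‖(h : Ltwo)‖

/-- The subspace `p·K_θ = {p·h : h ∈ K_θ}` of `H²`. -/
def wModel (p : Tc → ℂ) (θ : Hd) : Set Hd :=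
  {g : Hd | ∃ h ∈ Kspace θ, ((g : Ltwo) : Tc → ℂ) =ᵐ[muc]
    fun x => p x * ((h : Ltwo) : Tc → ℂ) x}

/-- A bounded Hankel operator on `H²`: a continuous antilinear map `H : H² → H²`
satisfying `S*H = HS`. -/
def IsHankelOp (H : Hd →L⋆[ℂ] Hd) : Prop := ∀ f : Hd, SstarOp (H f) = H (Sop f)

/-- A bounded measurable symbol on the circle (an `L^∞` function). -/
def IsBddFn (u : Tc → ℂ) : Prop := Measurable u ∧ ∃ C : ℝ, ∀ᵐ x ∂muc, ‖u x‖ ≤ C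

theorem memLp_mul_conj {u : Tc → ℂ} (hu : IsBddFn u) (f : Ltwo) :
    MemLp (fun x => u x * (starRingEnd ℂ) ((f : Tc → ℂ) x)) 2 muc := by
  obtain ⟨hmeas, C, hC⟩ := hu
  refine MemLp.of_le_mul (c := C) (Lp.memLp f)
    (hmeas.aestronglyMeasurable.mul
      (continuous_star.comp_aestronglyMeasurable (Lp.aestronglyMeasurable f))) ?_
  filter_upwards [hC] with x hx
  rw [norm_mul, RCLike.norm_conj]
  exact mul_le_mul_of_nonneg_right hx (norm_nonneg _)

/-- The Hankel operator with symbol `u`: `H_u f = P(u·f̄)`, defined on all of `L²(𝕋)`. -/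
def hankelL (u : Tc → ℂ) (hu : IsBddFn u) : Ltwo → Ltwo :=
  fun f => PL ((memLp_mul_conj hu f).toLp _)

/-- The Möbius transformation `μ(z) = (α − z)/(1 − ᾱz)` of the unit disk. -/
def mobius (α z : ℂ) : ℂ := (α - z) / (1 - (starRingEnd ℂ) α * z)

/-- The point `e^{ix} ∈ ℂ` corresponding to `x ∈ 𝕋`. -/
def circlePt (x : Tc) : ℂ := fourier 1 x

/-- The Möbius transformation `μ` viewed as a self-map of `𝕋`. -/
def mobiusT (α : ℂ) (x : Tc) : Tc := ((Complex.arg (mobius α (circlePt x)) : ℝ) : Tc)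

/-- The weight `√(1 − |α|²)/(1 − ᾱz)` in the definition of `U_μ`. -/
def umuWeight (α : ℂ) (x : Tc) : ℂ :=
  (Real.sqrt (1 - ‖α‖ ^ 2) : ℂ) / (1 - (starRingEnd ℂ) α * circlePt x)

/-- `U` is the operator `U_μ`: `(U_μ f)(z) = (√(1 − |α|²)/(1 − ᾱz))·f(μ(z))` a.e. -/
def IsUmu (α : ℂ) (U : Ltwo → Ltwo) : Prop :=
  ∀ f : Ltwo, ((U f : Ltwo) : Tc → ℂ) =ᵐ[muc]
    fun x => umuWeight α x * (f : Tc → ℂ) (mobiusT α x)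

/-!
A Hankel operator is symmetric for the bilinear pairing `(x, y) ↦ ⟪H x, y⟫`: on monomials
`S*H = HS` moves every power of `z` to the second slot, and monomials span a dense subspace.
Hence `H²` is a self-adjoint linear operator. For `f ∈ E ⊥ 𝟙` we have `S S* f = f`, and the
Hankel relation gives `H² S* f = S* H² f + ⟪u, S* f⟫ u = s² S* f + ⟪u, S* f⟫ u`. Pairing with the
eigenvector `H h` of `H²`, for which `⟪u, H h⟫ = s² ⟪h, 𝟙⟫ ≠ 0`, forces `⟪u, S* f⟫ = 0`.
-/

open scoped InnerProductSpace

theorem _root_.LinearMap.IsSymmetric.eq_zero_of_apply_eq_smul_add_smul {𝕜 E : Type*} [RCLike 𝕜]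
    [NormedAddCommGroup E] [InnerProductSpace 𝕜 E] {T : E →ₗ[𝕜] E} (hT : T.IsSymmetric)
    {μ : ℝ} {c : 𝕜} {g u v : E} (hg : T g = (μ : 𝕜) • g + c • u) (hv : T v = (μ : 𝕜) • v)
    (huv : ⟪u, v⟫_𝕜 ≠ 0) : c = 0 := by
  have h := hT g v
  rw [hg, hv, inner_add_left, inner_smul_left, inner_smul_left, inner_smul_right,
    RCLike.conj_ofReal, add_eq_left, mul_eq_zero, map_eq_zero] at h
  exact h.resolve_right huv

theorem ipH_eq_inner (f g : Hd) : ipH f g = ⟪g, f⟫_ℂ := rfl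

def coeff (n : ℤ) : Ltwo →L[ℂ] ℂ := innerSL ℂ (fourierBasis n : Ltwo)

theorem coeff_apply (n : ℤ) (f : Ltwo) : coeff n f = ⟪(fourierBasis n : Ltwo), f⟫_ℂ := rfl

theorem coeff_eq_fourierCoeff (n : ℤ) (f : Ltwo) : coeff n f = fourierCoeff (f : Tc → ℂ) n := by
  rw [coeff_apply, ← HilbertBasis.repr_apply_apply, fourierBasis_repr]

theorem ext_coeff {f g : Ltwo} (h : ∀ n, coeff n f = coeff n g) : f = g :=
  fourierBasis.repr.injective <| lp.ext <| funext fun n => by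
    rw [HilbertBasis.repr_apply_apply, HilbertBasis.repr_apply_apply]
    exact h n

theorem coeff_fourierBasis (n m : ℤ) : coeff n (fourierBasis m) = if n = m then 1 else 0 :=
  orthonormal_iff_ite.mp fourierBasis.orthonormal n m

theorem coeff_eq_zero_of_mem_Hardy {f : Ltwo} (hf : f ∈ Hardy) {n : ℤ} (hn : n < 0) :
    coeff n f = 0 := by
  rw [coeff_apply, ← HilbertBasis.repr_apply_apply]
  exact hf n hn

theorem fourierBasis_mem_Hardy {m : ℤ} (hm : 0 ≤ m) : (fourierBasis m : Ltwo) ∈ Hardy := by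
  intro n hn
  rw [HilbertBasis.repr_apply_apply, ← coeff_apply, coeff_fourierBasis, if_neg (by omega)]

theorem coeff_P2 (v : Ltwo) {n : ℤ} (hn : 0 ≤ n) : coeff n (P2 v) = coeff n v :=
  Hardy.inner_orthogonalProjectionOnto_eq_of_mem_left ⟨_, fourierBasis_mem_Hardy hn⟩ v

theorem coeff_mulF (m n : ℤ) (f : Ltwo) : coeff n (mulF m f) = coeff (n - m) f := by
  rw [coeff_eq_fourierCoeff, coeff_eq_fourierCoeff, fourierCoeff_congr_ae (mulF_coe m f),
    fourierCoeff_fourier_mul]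

theorem inner_mulF_neg_one_left (g f : Ltwo) : ⟪mulF (-1) g, f⟫_ℂ = ⟪g, mulF 1 f⟫_ℂ := by
  rw [L2.inner_def, L2.inner_def]
  refine integral_congr_ae ?_
  filter_upwards [mulF_coe (-1) g, mulF_coe 1 f] with x hg hf
  rw [hg, hf, RCLike.inner_apply, RCLike.inner_apply, fourier_neg, map_mul, Complex.conj_conj]
  ring

theorem oneH_coe : (oneH : Ltwo) = fourierBasis 0 := by
  rw [coe_fourierBasis]
  rfl

theorem inner_oneH_left (f : Hd) : ⟪oneH, f⟫_ℂ = coeff 0 f := by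
  rw [coeff_apply, ← oneH_coe]
  rfl

theorem coeff_Sop (f : Hd) (n : ℤ) : coeff n (Sop f) = coeff (n - 1) f :=
  coeff_mulF 1 n f

theorem coeff_SstarOp (f : Hd) {n : ℤ} (hn : 0 ≤ n) : coeff n (SstarOp f) = coeff (n + 1) f := by
  rw [SstarOp, coeff_P2 _ hn, coeff_mulF, sub_neg_eq_add]

theorem Sop_SstarOp (f : Hd) : Sop (SstarOp f) = f - ⟪oneH, f⟫_ℂ • oneH := by
  refine Subtype.ext <| ext_coeff fun n => ?_
  simp only [Submodule.coe_sub, Submodule.coe_smul, map_sub, map_smul, coeff_Sop, oneH_coe,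
    coeff_fourierBasis, inner_oneH_left, smul_eq_mul]
  rcases lt_trichotomy n 0 with hn | rfl | hn
  · rw [coeff_eq_zero_of_mem_Hardy (SstarOp f).2 (by omega),
      coeff_eq_zero_of_mem_Hardy f.2 hn, if_neg hn.ne]
    ring
  · rw [coeff_eq_zero_of_mem_Hardy (SstarOp f).2 (by omega), if_pos rfl]
    ring
  · rw [coeff_SstarOp f (by omega), sub_add_cancel, if_neg hn.ne']
    ring

theorem inner_SstarOp_left (x y : Hd) : ⟪SstarOp x, y⟫_ℂ = ⟪x, Sop y⟫_ℂ := by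
  rw [SstarOp, P2, Submodule.inner_orthogonalProjectionOnto_eq_of_mem_right,
    inner_mulF_neg_one_left]
  rfl

theorem SstarOp_smul (c : ℂ) (f : Hd) : SstarOp (c • f) = c • SstarOp f :=
  ext_inner_right ℂ fun y => by
    -- without `(E := Hd)` the `SMul` instance of the submodule `Hd` does not unify
    rw [inner_SstarOp_left, inner_smul_left (E := Hd), inner_smul_left (E := Hd),
      inner_SstarOp_left]

def monomial (n : ℕ) : Hd := Sop^[n] oneH

theorem monomial_succ (n : ℕ) : monomial (n + 1) = Sop (monomial n) :=
  Function.iterate_succ_apply' _ _ _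

theorem monomial_coe (n : ℕ) : (monomial n : Ltwo) = fourierBasis n := by
  induction n with
  | zero => exact oneH_coe
  | succ n ih =>
    refine ext_coeff fun k => ?_
    rw [monomial_succ, coeff_Sop, ih, coeff_fourierBasis, coeff_fourierBasis]
    push_cast
    simp only [sub_eq_iff_eq_add]

theorem dense_span_monomial : Dense (Submodule.span ℂ (Set.range monomial) : Set Hd) := by
  rw [Submodule.dense_iff_topologicalClosure_eq_top, Submodule.topologicalClosure_eq_top_iff,
    Submodule.eq_bot_iff]
  intro x hx
  have hcoeff (n : ℕ) : coeff n x = 0 := by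
    rw [coeff_apply, ← monomial_coe]
    exact (Submodule.mem_orthogonal _ x).mp hx _ (Submodule.subset_span ⟨n, rfl⟩)
  refine Subtype.ext <| ext_coeff fun n => ?_
  rcases lt_or_ge n 0 with hn | hn
  · rw [coeff_eq_zero_of_mem_Hardy x.2 hn, Submodule.coe_zero, map_zero]
  · lift n to ℕ using hn
    rw [hcoeff n, Submodule.coe_zero, map_zero]

def hankelForm (H : Hd →L⋆[ℂ] Hd) : Hd →L[ℂ] Hd →L[ℂ] ℂ := (innerSL ℂ).comp H

namespace IsHankelOp

variable {H : Hd →L⋆[ℂ] Hd}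

theorem inner_apply_Sop (hH : IsHankelOp H) (x y : Hd) :
    ⟪H (Sop x), y⟫_ℂ = ⟪H x, Sop y⟫_ℂ := by
  rw [← hH, inner_SstarOp_left]

theorem inner_apply_monomial (hH : IsHankelOp H) (m n : ℕ) :
    ⟪H (monomial m), monomial n⟫_ℂ = ⟪H oneH, monomial (m + n)⟫_ℂ := by
  induction m generalizing n with
  | zero => rw [zero_add]; rfl
  | succ m ih =>
    rw [monomial_succ, hH.inner_apply_Sop, ← monomial_succ, ih, add_right_comm, add_assoc]

theorem inner_apply_comm (hH : IsHankelOp H) (x y : Hd) : ⟪H x, y⟫_ℂ = ⟪H y, x⟫_ℂ := by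
  have hsymm : hankelForm H = (hankelForm H).flip := by
    refine ContinuousLinearMap.ext_on dense_span_monomial ?_
    rintro _ ⟨m, rfl⟩
    refine ContinuousLinearMap.ext_on dense_span_monomial ?_
    rintro _ ⟨n, rfl⟩
    simp only [hankelForm, ContinuousLinearMap.flip_apply, ContinuousLinearMap.comp_apply,
      innerSL_apply_apply, hH.inner_apply_monomial, add_comm]
  exact congr($hsymm x y)

theorem isSymmetric_comp_self (hH : IsHankelOp H) :
    ((H.comp H : Hd →L[ℂ] Hd) : Hd →ₗ[ℂ] Hd).IsSymmetric := fun x y =>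
  calc ⟪H (H x), y⟫_ℂ = ⟪H y, H x⟫_ℂ := hH.inner_apply_comm _ _
    _ = ⟪x, H (H y)⟫_ℂ := by
      rw [← inner_conj_symm (E := Hd), hH.inner_apply_comm, inner_conj_symm (E := Hd)]

theorem comp_self_SstarOp (hH : IsHankelOp H) {f : Hd} (hf : ⟪oneH, f⟫_ℂ = 0) :
    H (H (SstarOp f)) = SstarOp (H (H f)) + ⟪H oneH, SstarOp f⟫_ℂ • H oneH := by
  have hSf : Sop (SstarOp f) = f := by rw [Sop_SstarOp, hf, zero_smul, sub_zero]
  have hHSf : H (SstarOp f) = Sop (H f) + ⟪oneH, H (SstarOp f)⟫_ℂ • oneH := by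
    have h := Sop_SstarOp (H (SstarOp f))
    rw [hH, hSf] at h
    rw [h, sub_add_cancel]
  rw [hHSf, map_add, map_smulₛₗ, ← hH, inner_conj_symm (E := Hd), hH.inner_apply_comm]

end IsHankelOp

/-- If some element of the Schmidt subspace `E = E_H(s)` is not orthogonal to `𝟙`, then
`S*(E ∩ 𝟙^⊥) ⊆ E ∩ u^⊥`, where `u = H𝟙`. -/
theorem sstar_schmidt_inclusion
    (H : Hd →L⋆[ℂ] Hd) (hH : IsHankelOp H) (s : ℝ) (hs : 0 < s)
    (h : Hd) (hhE : H (H h) = ((s : ℂ) ^ 2) • h) (hh1 : ipH h oneH ≠ 0) :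
    (∀ f : Hd, H (H f) = ((s : ℂ) ^ 2) • f → ipH f oneH = 0 →
      H (H (SstarOp f)) = ((s : ℂ) ^ 2) • SstarOp f ∧ ipH (SstarOp f) (H oneH) = 0) ∧
    SstarOp '' {f : Hd | H (H f) = ((s : ℂ) ^ 2) • f ∧ ipH f oneH = 0} ⊆
      {f : Hd | H (H f) = ((s : ℂ) ^ 2) • f ∧ ipH f (H oneH) = 0} := by
  simp only [ipH_eq_inner] at hh1 ⊢
  have hs2 : ((s ^ 2 : ℝ) : ℂ) = (s : ℂ) ^ 2 := Complex.ofReal_pow s 2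
  have hHh : H (H (H h)) = ((s ^ 2 : ℝ) : ℂ) • H h := by
    rw [hhE, map_smulₛₗ, hs2, map_pow, Complex.conj_ofReal]
  have hu : ⟪H oneH, H h⟫_ℂ ≠ 0 := by
    rw [hH.inner_apply_comm, hhE, inner_smul_left (E := Hd), ← inner_conj_symm (E := Hd)]
    exact mul_ne_zero (by simpa using hs.ne') ((map_ne_zero _).mpr hh1)
  have key (f : Hd) (hfE : H (H f) = ((s : ℂ) ^ 2) • f) (hf1 : ⟪oneH, f⟫_ℂ = 0) :
      H (H (SstarOp f)) = ((s : ℂ) ^ 2) • SstarOp f ∧ ⟪H oneH, SstarOp f⟫_ℂ = 0 := by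
    have hg : H (H (SstarOp f)) =
        ((s ^ 2 : ℝ) : ℂ) • SstarOp f + ⟪H oneH, SstarOp f⟫_ℂ • H oneH := by
      rw [hH.comp_self_SstarOp hf1, hfE, SstarOp_smul, hs2]
    have hc :=
      LinearMap.IsSymmetric.eq_zero_of_apply_eq_smul_add_smul hH.isSymmetric_comp_self hg hHh hu
    exact ⟨by rw [hg, hc, zero_smul, add_zero, hs2], hc⟩
  exact ⟨key, by rintro _ ⟨f, ⟨hfE, hf1⟩, rfl⟩; exact key f hfE hf1⟩

end HankelSchmidt
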